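/- The commutator [x, y] = x y x^{-1} y^{-1} in the free group F_2 = ⟨x, y⟩ is inseparable: it is not contained in any proper free factor of F_2. -/

import Mathlib

/-- A subgroup `F` of a group `G` is a proper free factor if there is a nontrivial
subgroup `K` such that `G` is the internal free product of `F` and `K`. -/
def IsProperFreeFactor {G : Type*} [Group G] (F : Subgroup G) : Prop :=
  ∃ K : Subgroup G, F ≠ ⊥ ∧ K ≠ ⊥ ∧
    Function.Bijective (Monoid.Coprod.lift F.subtype K.subtype)

/-- An element of a group is separable if it lies in a proper free factor. -/
def IsSeparableElt {G : Type*} [Group G] (w : G) : Prop :=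
  ∃ F : Subgroup G, IsProperFreeFactor F ∧ w ∈ F

/-- An element of the free group `F_n` is primitive if some automorphism carries
a standard generator to it, equivalently it belongs to some basis. -/
def IsPrimitiveElt {n : ℕ} (w : FreeGroup (Fin n)) : Prop :=
  ∃ (φ : FreeGroup (Fin n) ≃* FreeGroup (Fin n)) (i : Fin n), φ (FreeGroup.of i) = w

/-!
Nielsen–Schreier makes a free factor `F` of `F₂ = F ∗ K` and its complement `K` free, and a free
basis of `F₂` is then the disjoint union of bases of `F` and `K`. As both factors are nontrivial,
`F` has rank one and is abelian. The retraction `F₂ → F` killing `K` fixes `F` and sends `[x, y]`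
to a commutator in the abelian group `F`, so a commutator lying in `F` is trivial; `[x, y]` is not.
-/

open Monoid Monoid.Coprod
open scoped commutatorElement

theorem subsingleton_left_of_card_sum_eq_two {β γ : Type*} [Nonempty β] [Nonempty γ]
    (h : Nat.card (β ⊕ γ) = 2) : Subsingleton β := by
  have := Nat.finite_of_card_ne_zero (h.trans_ne two_ne_zero)
  have := Finite.sum_left (α := β) γ
  have := Finite.sum_right β (β := γ)
  rw [Nat.card_sum] at h
  have : 0 < Nat.card γ := Nat.card_pos
  rw [← Finite.card_le_one_iff_subsingleton]
  omega

namespace FreeGroup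

def sumMulEquivCoprod (α β : Type*) : FreeGroup (α ⊕ β) ≃* FreeGroup α ∗ FreeGroup β :=
  MonoidHom.toMulEquiv
    (FreeGroup.lift (Sum.elim (Coprod.inl ∘ of) (Coprod.inr ∘ of)))
    (Coprod.lift (map Sum.inl) (map Sum.inr))
    (by ext (a | b) <;> simp)
    (by ext <;> simp)

theorem mul_comm_of_subsingleton {α : Type*} [Subsingleton α] (a b : FreeGroup α) :
    a * b = b * a := by
  cases isEmpty_or_nonempty α
  · exact Subsingleton.elim _ _
  · have : Unique α := uniqueOfSubsingleton (Classical.arbitrary α)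
    exact IsCyclic.commGroup.mul_comm a b

theorem commutatorElement_of_zero_of_one_ne_one :
    ⁅(of 0 : FreeGroup (Fin 2)), (of 1 : FreeGroup (Fin 2))⁆ ≠ 1 := by
  decide

end FreeGroup

namespace IsFreeGroup

variable {G H : Type*} [Group G] [Group H] [IsFreeGroup G] [IsFreeGroup H]

theorem nonempty_generators [Nontrivial G] : Nonempty (Generators G) := by
  by_contra h
  rw [not_nonempty_iff] at h
  exact not_subsingleton G (toFreeGroup G).toEquiv.subsingleton

theorem mul_comm_of_subsingleton_generators [Subsingleton (Generators G)] (a b : G) :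
    a * b = b * a :=
  (toFreeGroup G).injective <| by simp only [map_mul, FreeGroup.mul_comm_of_subsingleton]

noncomputable def generatorsEquivOfCoprod {α : Type*} (e : G ∗ H ≃* FreeGroup α) :
    α ≃ Generators G ⊕ Generators H :=
  .ofFreeGroupEquiv <| e.symm.trans <|
    (MulEquiv.coprodCongr (toFreeGroup G) (toFreeGroup H)).trans
      (FreeGroup.sumMulEquivCoprod _ _).symm

end IsFreeGroup

namespace IsProperFreeFactor

variable {G : Type*} [Group G] {F : Subgroup G}

theorem exists_retraction (hF : IsProperFreeFactor F) :
    ∃ ρ : G →* F, ∀ f : F, ρ f = f := by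
  obtain ⟨K, -, -, hbij⟩ := hF
  let e := MulEquiv.ofBijective _ hbij
  refine ⟨(Coprod.lift (MonoidHom.id F) 1).comp e.symm.toMonoidHom, fun f => ?_⟩
  have : e.symm f = Coprod.inl f :=
    e.symm_apply_eq.mpr (Coprod.lift_apply_inl F.subtype K.subtype f).symm
  simp [this]

theorem commutatorElement_eq_one (hF : IsProperFreeFactor F) (hcomm : ∀ a b : F, a * b = b * a)
    {a b : G} (hab : ⁅a, b⁆ ∈ F) : ⁅a, b⁆ = 1 := by
  obtain ⟨ρ, hρ⟩ := hF.exists_retraction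
  have : ρ ⁅a, b⁆ = 1 := by
    rw [map_commutatorElement, commutatorElement_eq_one_iff_mul_comm]
    exact hcomm _ _
  simpa using congrArg Subtype.val ((hρ ⟨_, hab⟩).symm.trans this)

theorem mul_comm_of_card_eq_two {α : Type*} {F : Subgroup (FreeGroup α)}
    (hα : Nat.card α = 2) (hF : IsProperFreeFactor F) (a b : F) : a * b = b * a := by
  obtain ⟨K, hF, hK, hbij⟩ := hF
  have := (Subgroup.nontrivial_iff_ne_bot F).mpr hF
  have := (Subgroup.nontrivial_iff_ne_bot K).mpr hK
  have := IsFreeGroup.nonempty_generators (G := F)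
  have := IsFreeGroup.nonempty_generators (G := K)
  have e := IsFreeGroup.generatorsEquivOfCoprod (MulEquiv.ofBijective _ hbij)
  have := subsingleton_left_of_card_sum_eq_two ((Nat.card_congr e).symm.trans hα)
  exact IsFreeGroup.mul_comm_of_subsingleton_generators a b

end IsProperFreeFactor

theorem commutatorElement_eq_one_of_isSeparableElt {α : Type*} (hα : Nat.card α = 2)
    {a b : FreeGroup α} (h : IsSeparableElt ⁅a, b⁆) : ⁅a, b⁆ = 1 := by
  obtain ⟨F, hF, hab⟩ := h
  exact hF.commutatorElement_eq_one (hF.mul_comm_of_card_eq_two hα) hab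

/-- The commutator `[x, y]` is inseparable in `F_2`. -/
theorem commutator_inseparable :
    ¬ IsSeparableElt ((FreeGroup.of 0 : FreeGroup (Fin 2)) * FreeGroup.of 1 *
      (FreeGroup.of 0)⁻¹ * (FreeGroup.of 1)⁻¹) := by
  rw [← commutatorElement_def]
  exact fun h => FreeGroup.commutatorElement_of_zero_of_one_ne_one
    (commutatorElement_eq_one_of_isSeparableElt (Nat.card_fin 2) h)
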